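/- Let (X, B, μ) be a probability measure space, T₁ and T₂ two measure preserving transformations of (X, B, μ), and let I₁ and I₂ denote the sub-σ-algebras of B consisting of T₁-invariant and T₂-invariant sets respectively. Then for every measurable set A, the functions x ↦ (1/N²) ∑_{n,m=1}^N 1_A(T₁ⁿx) · 1_A(T₂^{n+m}x) converge in L²(μ) norm, as N → ∞, to the function x ↦ E(1_A | I₁)(x) · E(1_A | I₂)(x). -/

import Mathlib

open MeasureTheory Filter Finset

set_option maxHeartbeats 1000000
set_option synthInstance.maxHeartbeats 200000

/-- The sub-σ-algebra of `T`-invariant measurable sets, `{A ∈ B : T⁻¹A = A}`. -/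
def invariantAlgebra {X : Type*} [MeasurableSpace X] (T : X → X) : MeasurableSpace X where
  MeasurableSet' A := MeasurableSet A ∧ T ⁻¹' A = A
  measurableSet_empty := ⟨MeasurableSet.empty, Set.preimage_empty⟩
  measurableSet_compl A hA := ⟨hA.1.compl, by rw [Set.preimage_compl, hA.2]⟩
  measurableSet_iUnion s hs := ⟨MeasurableSet.iUnion fun i => (hs i).1, by
    simp only [Set.preimage_iUnion]
    exact Set.iUnion_congr fun i => (hs i).2⟩

open Topology ENNReal

section Aux

variable {X : Type*} [mX : MeasurableSpace X] {μ : Measure X}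

lemma invariantAlgebra_le (T : X → X) : invariantAlgebra T ≤ mX := fun _ hA => hA.1

/-- The Koopman operator on `L²`. -/
noncomputable def koopman (T : X → X) (hT : MeasurePreserving T μ μ) :
    Lp ℝ 2 μ →L[ℝ] Lp ℝ 2 μ where
  toLinearMap :=
  { toFun := Lp.compMeasurePreserving T hT
    map_add' := fun f g => map_add _ f g
    map_smul' := fun c f => Lp.ext <| by
      have h1 := Lp.coeFn_compMeasurePreserving (μ := μ) (c • f) hT
      have h2 := hT.quasiMeasurePreserving.ae_eq_comp (Lp.coeFn_smul c f)
      have h3 := hT.quasiMeasurePreserving.ae_eq_comp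
        (Lp.coeFn_compMeasurePreserving (μ := μ) f hT).symm
      have h4 := Lp.coeFn_smul c (Lp.compMeasurePreserving (μ := μ) T hT f)
      have h5 := (Lp.coeFn_compMeasurePreserving (μ := μ) f hT)
      filter_upwards [h1, h2, h4, h5] with x hx1 hx2 hx4 hx5
      simp only [RingHom.id_apply]
      rw [hx1, hx4]
      have : ((c • (f : X → ℝ)) ∘ T) x = c • ((f : X → ℝ) ∘ T) x := rfl
      rw [hx2] at hx1 ⊢
      simp only [Pi.smul_apply, Function.comp_apply, smul_eq_mul] at *
      rw [← hx5] }
  cont := (Lp.isometry_compMeasurePreserving hT).continuous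

lemma koopman_apply (T : X → X) (hT : MeasurePreserving T μ μ) (f : Lp ℝ 2 μ) :
    koopman T hT f = Lp.compMeasurePreserving T hT f := rfl

lemma koopman_norm_le (T : X → X) (hT : MeasurePreserving T μ μ) : ‖koopman T hT‖ ≤ 1 :=
  ContinuousLinearMap.opNorm_le_bound _ zero_le_one fun f => by
    rw [one_mul, koopman_apply, Lp.norm_compMeasurePreserving]

lemma koopman_coeFn (T : X → X) (hT : MeasurePreserving T μ μ) (f : Lp ℝ 2 μ) :
    ⇑(koopman T hT f) =ᵐ[μ] ⇑f ∘ T :=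
  Lp.coeFn_compMeasurePreserving f hT

lemma koopman_iterate_coeFn (T : X → X) (hT : MeasurePreserving T μ μ) (n : ℕ) (f : Lp ℝ 2 μ) :
    ⇑((⇑(koopman T hT))^[n] f) =ᵐ[μ] ⇑f ∘ T^[n] := by
  induction n with
  | zero => simp only [Function.iterate_zero, id_eq]; exact Filter.EventuallyEq.rfl
  | succ n ih =>
    rw [Function.iterate_succ_apply']
    refine (koopman_coeFn T hT _).trans ?_
    refine (hT.quasiMeasurePreserving.ae_eq_comp ih).trans ?_
    have : (⇑f ∘ T^[n]) ∘ T = ⇑f ∘ T^[n + 1] := by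
      funext x; simp [Function.iterate_succ_apply]
    rw [this]

lemma iterate_preimage_invariant {T : X → X} {s : Set X} (hsT : T ⁻¹' s = s) (n : ℕ) :
    T^[n] ⁻¹' s = s := by
  induction n with
  | zero => simp
  | succ n ih => rw [Function.iterate_succ, Set.preimage_comp, ih, hsT]

lemma comp_iterate_ae_eq_self {T : X → X} (hT : MeasurePreserving T μ μ) {g : X → ℝ}
    (hg : g ∘ T =ᵐ[μ] g) (n : ℕ) : g ∘ T^[n] =ᵐ[μ] g := by
  induction n with
  | zero => simp only [Function.iterate_zero]; exact Filter.EventuallyEq.rfl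
  | succ n ih =>
    have : g ∘ T^[n + 1] = (g ∘ T^[n]) ∘ T := by
      funext x; simp [Function.iterate_succ_apply]
    rw [this]
    exact (hT.quasiMeasurePreserving.ae_eq_comp ih).trans hg

/-- A strictly measurable a.e. `T`-invariant function is a.e. equal to an
`invariantAlgebra T`-strongly-measurable function (via the limsup trick). -/
lemma aeStronglyMeasurable'_invariantAlgebra {T : X → X} (hT : MeasurePreserving T μ μ)
    {g : X → ℝ} (hgm : StronglyMeasurable g) (hg : g ∘ T =ᵐ[μ] g) :
    AEStronglyMeasurable[invariantAlgebra T] g μ := by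
  set h : X → ℝ := fun x => (limsup (fun n => ((g (T^[n] x)) : EReal)) atTop).toReal with hh
  have hcomp : h ∘ T = h := by
    funext x
    simp only [h, Function.comp_apply]
    congr 1
    have : (fun n => ((g (T^[n] (T x))) : EReal)) = fun n => ((g (T^[n + 1] x)) : EReal) := by
      funext n; rw [Function.iterate_succ_apply]
    rw [this]
    exact limsup_nat_add (fun n => ((g (T^[n] x)) : EReal)) 1
  have hmeas : Measurable h := by
    apply Measurable.ereal_toReal
    exact Measurable.limsup fun n =>
      measurable_coe_real_ereal.comp (hgm.measurable.comp (hT.iterate n).measurable)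
  have hminv : Measurable[invariantAlgebra T] h := fun t ht =>
    ⟨hmeas ht, by rw [← Set.preimage_comp, hcomp]⟩
  have hae : ∀ᵐ x ∂μ, ∀ n, g (T^[n] x) = g x :=
    ae_all_iff.2 fun n => comp_iterate_ae_eq_self hT hg n
  refine ⟨h, hminv.stronglyMeasurable, ?_⟩
  filter_upwards [hae] with x hx
  have : (fun n => ((g (T^[n] x)) : EReal)) = fun _ => ((g x : ℝ) : EReal) := by
    funext n; rw [hx n]
  simp only [h, this, limsup_const]
  exact (EReal.toReal_coe _).symm

lemma Lp_coeFn_sum {ι : Type*} (s : Finset ι) (F : ι → Lp ℝ 2 μ) :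
    ⇑(∑ i ∈ s, F i) =ᵐ[μ] fun x => ∑ i ∈ s, (F i : X → ℝ) x := by
  classical
  induction s using Finset.induction_on with
  | empty => simp only [Finset.sum_empty]; exact Lp.coeFn_zero ℝ 2 μ
  | insert a s' hns ih =>
    rw [Finset.sum_insert hns]
    filter_upwards [Lp.coeFn_add (F a) (∑ i ∈ s', F i), ih] with x hx hx2
    rw [hx]
    simp only [Pi.add_apply, hx2, Finset.sum_insert hns]

lemma setIntegral_comp_iterate {T : X → X} (hT : MeasurePreserving T μ μ) {f : X → ℝ}
    (hf : AEStronglyMeasurable f μ) {s : Set X} (hs : MeasurableSet s) (hsT : T ⁻¹' s = s)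
    (n : ℕ) : ∫ x in s, f (T^[n] x) ∂μ = ∫ x in s, f x ∂μ := by
  have hTn : MeasurePreserving T^[n] μ μ := hT.iterate n
  have h1 : ∀ x, s.indicator f (T^[n] x) = s.indicator (fun y => f (T^[n] y)) x := by
    intro x
    have := Set.indicator_comp_right (s := s) T^[n] (g := f) (x := x)
    rw [iterate_preimage_invariant hsT] at this
    exact this.symm
  rw [← integral_indicator hs, ← integral_indicator hs]
  calc ∫ x, s.indicator (fun y => f (T^[n] y)) x ∂μ
      = ∫ x, s.indicator f (T^[n] x) ∂μ := by
        exact integral_congr_ae (Filter.EventuallyEq.of_eq (funext fun x => (h1 x).symm))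
    _ = ∫ y, s.indicator f y ∂Measure.map T^[n] μ := by
        rw [integral_map hTn.measurable.aemeasurable]
        rw [hTn.map_eq]
        exact hf.indicator hs
    _ = ∫ y, s.indicator f y ∂μ := by rw [hTn.map_eq]

/-- Mean ergodic theorem: Birkhoff averages of the Koopman operator converge in `L²`
to the conditional expectation with respect to the invariant σ-algebra. -/
theorem exists_tendsto_condexp [IsProbabilityMeasure μ] (T : X → X)
    (hT : MeasurePreserving T μ μ) (f : Lp ℝ 2 μ) :
    ∃ L : Lp ℝ 2 μ,
      Tendsto (fun N => birkhoffAverage ℝ (⇑(koopman T hT)) id N f) atTop (𝓝 L) ∧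
      koopman T hT L = L ∧ ⇑L =ᵐ[μ] μ[⇑f | invariantAlgebra T] := by
  set U := koopman T hT with hU
  obtain ⟨L, hfix, htend⟩ :
      ∃ L : Lp ℝ 2 μ, U L = L ∧
        Tendsto (fun N => birkhoffAverage ℝ (⇑U) id N f) atTop (𝓝 L) := by
    refine ⟨_, ?_, U.tendsto_birkhoffAverage_orthogonalProjection (koopman_norm_le T hT) f⟩
    have h := (Submodule.orthogonalProjectionOnto (LinearMap.eqLocus (U : Lp ℝ 2 μ →ₗ[ℝ] Lp ℝ 2 μ)
      ((1 : Lp ℝ 2 μ →L[ℝ] Lp ℝ 2 μ) : Lp ℝ 2 μ →ₗ[ℝ] Lp ℝ 2 μ)) f).2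
    rw [LinearMap.mem_eqLocus] at h
    simpa using h
  have hm : invariantAlgebra T ≤ mX := invariantAlgebra_le T
  haveI : IsFiniteMeasure (μ.trim hm) := isFiniteMeasure_trim hm
  have hLT : ⇑L ∘ T =ᵐ[μ] ⇑L := by
    have h := koopman_coeFn T hT L
    rw [show koopman T hT L = L from hfix] at h
    exact h.symm
  have hgm' : AEStronglyMeasurable[invariantAlgebra T] (⇑L) μ :=
    aeStronglyMeasurable'_invariantAlgebra hT (Lp.stronglyMeasurable L) hLT
  refine ⟨L, htend, hfix, ?_⟩
  set AN : ℕ → Lp ℝ 2 μ := fun N => birkhoffAverage ℝ (⇑U) id N f with hAN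
  -- coeFn description of the Birkhoff averages
  have hANcoe : ∀ N, ⇑(AN N)
      =ᵐ[μ] fun x => (N : ℝ)⁻¹ * ∑ k ∈ range N, (f : X → ℝ) (T^[k] x) := by
    intro N
    have hrw : AN N = (N : ℝ)⁻¹ • ∑ k ∈ range N, (⇑U)^[k] f := by
      simp [hAN, birkhoffAverage, birkhoffSum]
    rw [hrw]
    have h_all : ∀ᵐ x ∂μ, ∀ k, ((⇑U)^[k] f : X → ℝ) x = (f : X → ℝ) (T^[k] x) :=
      ae_all_iff.2 fun k => koopman_iterate_coeFn T hT k f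
    filter_upwards [Lp.coeFn_smul ((N : ℝ)⁻¹) (∑ k ∈ range N, (⇑U)^[k] f),
      Lp_coeFn_sum (range N) (fun k => (⇑U)^[k] f), h_all] with x hx1 hx2 hx3
    rw [hx1]
    simp only [Pi.smul_apply, hx2, smul_eq_mul]
    congr 1
    exact Finset.sum_congr rfl fun k _ => hx3 k
  have hfint : Integrable (⇑f) μ := (Lp.memLp f).integrable one_le_two
  have hLint : Integrable (⇑L) μ := (Lp.memLp L).integrable one_le_two
  refine ae_eq_condExp_of_forall_setIntegral_eq hm hfint
    (fun s _ _ => hLint.integrableOn) (fun s hs hμs => ?_) hgm'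
  -- set integral equality for invariant s
  have hs1 : MeasurableSet s := hs.1
  have hs2 : T ⁻¹' s = s := hs.2
  have hint_comp : ∀ k : ℕ, Integrable (fun x => (f : X → ℝ) (T^[k] x)) μ := fun k =>
    ((Lp.memLp f).comp_measurePreserving (hT.iterate k)).integrable one_le_two
  have hkey : ∀ N : ℕ, 1 ≤ N →
      ∫ x in s, (AN N : X → ℝ) x ∂μ = ∫ x in s, (f : X → ℝ) x ∂μ := by
    intro N hN
    rw [integral_congr_ae (ae_restrict_of_ae (hANcoe N))]
    rw [integral_const_mul, integral_finset_sum _ (fun k _ => (hint_comp k).integrableOn)]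
    have : ∀ k ∈ range N, ∫ x in s, (f : X → ℝ) (T^[k] x) ∂μ = ∫ x in s, (f : X → ℝ) x ∂μ :=
      fun k _ => setIntegral_comp_iterate hT (Lp.aestronglyMeasurable f) hs1 hs2 k
    have hN0 : (N : ℝ) ≠ 0 := Nat.cast_ne_zero.mpr (Nat.one_le_iff_ne_zero.mp hN)
    rw [Finset.sum_congr rfl this, Finset.sum_const, card_range, nsmul_eq_mul, ← mul_assoc,
      inv_mul_cancel₀ hN0, one_mul]
  -- convergence of set integrals
  have hL2tend : Tendsto (fun N => eLpNorm ((AN N : X → ℝ) - ⇑L) 2 μ)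
      atTop (𝓝 0) := (Lp.tendsto_Lp_iff_tendsto_eLpNorm' _ _).mp htend
  have hL1tend : Tendsto (fun N => eLpNorm ((AN N : X → ℝ) - ⇑L) 1 μ)
      atTop (𝓝 0) := by
    refine tendsto_of_tendsto_of_tendsto_of_le_of_le tendsto_const_nhds hL2tend
      (fun N => zero_le) (fun N => ?_)
    exact eLpNorm_le_eLpNorm_of_exponent_le one_le_two
      ((Lp.aestronglyMeasurable _).sub (Lp.aestronglyMeasurable L))
  have h1 : Tendsto (fun N => ∫ x in s, (AN N : X → ℝ) x ∂μ)
      atTop (𝓝 (∫ x in s, (L : X → ℝ) x ∂μ)) :=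
    tendsto_setIntegral_of_L1' (⇑L) hLint.aestronglyMeasurable
      (Filter.Eventually.of_forall fun N => (Lp.memLp _).integrable one_le_two) hL1tend s
  have hEv : (fun N => ∫ x in s, (AN N : X → ℝ) x ∂μ)
      =ᶠ[atTop] (fun _ => ∫ x in s, (f : X → ℝ) x ∂μ) :=
    Filter.eventually_atTop.2 ⟨1, fun N hN => hkey N hN⟩
  exact tendsto_nhds_unique (h1.congr' hEv) tendsto_const_nhds


/-- The `1..N` averages of `f₀ ∘ T^[n]` converge in `L²` to `φ`,
given von Neumann convergence of the `0..N-1` Birkhoff averages to a fixed point `L`. -/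
lemma shifted_average_tendsto [IsProbabilityMeasure μ] (T : X → X)
    (hT : MeasurePreserving T μ μ) {F L : Lp ℝ 2 μ}
    (htend : Tendsto (fun N => birkhoffAverage ℝ (⇑(koopman T hT)) id N F) atTop (𝓝 L))
    (hfix : koopman T hT L = L) {f₀ : X → ℝ} (hFcoe : ⇑F =ᵐ[μ] f₀) {φ : X → ℝ}
    (hφ : ⇑L =ᵐ[μ] φ) (a : ℕ → X → ℝ)
    (ha : ∀ N x, a N x = (N : ℝ)⁻¹ * ∑ n ∈ Icc 1 N, f₀ (T^[n] x)) :
    Tendsto (fun N => eLpNorm (a N - φ) 2 μ) atTop (𝓝 0) := by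
  set U := koopman T hT with hU
  have hBtend : Tendsto (fun N => U (birkhoffAverage ℝ (⇑U) id N F)) atTop (𝓝 L) := by
    have h := (U.continuous.tendsto L).comp htend
    rwa [show U L = L from hfix] at h
  have hBcoe : ∀ N, ⇑(U (birkhoffAverage ℝ (⇑U) id N F)) =ᵐ[μ] a N := by
    intro N
    have hrw : U (birkhoffAverage ℝ (⇑U) id N F) = (N : ℝ)⁻¹ • ∑ n ∈ Icc 1 N, (⇑U)^[n] F := by
      rw [birkhoffAverage, birkhoffSum]
      rw [_root_.map_smul, map_sum]
      congr 1
      rw [← Finset.Ico_add_one_right_eq_Icc, Finset.sum_Ico_eq_sum_range]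
      refine Finset.sum_congr (by norm_num) fun k _ => ?_
      show U ((⇑U)^[k] F) = (⇑U)^[1 + k] F
      rw [add_comm 1 k, Function.iterate_succ_apply']
    rw [hrw]
    have h_all : ∀ᵐ x ∂μ, ∀ k, ((⇑U)^[k] F : X → ℝ) x = (F : X → ℝ) (T^[k] x) :=
      ae_all_iff.2 fun k => koopman_iterate_coeFn T hT k F
    have h_allF : ∀ᵐ x ∂μ, ∀ k : ℕ, (F : X → ℝ) (T^[k] x) = f₀ (T^[k] x) :=
      ae_all_iff.2 fun k => (hT.iterate k).quasiMeasurePreserving.ae_eq_comp hFcoe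
    filter_upwards [Lp.coeFn_smul ((N : ℝ)⁻¹) (∑ n ∈ Icc 1 N, (⇑U)^[n] F),
      Lp_coeFn_sum (Icc 1 N) (fun n => (⇑U)^[n] F), h_all, h_allF] with x h1 h2 h3 h4
    rw [h1]
    simp only [Pi.smul_apply, h2, smul_eq_mul, ha]
    congr 1
    exact Finset.sum_congr rfl fun n _ => (h3 n).trans (h4 n)
  have h2 := (Lp.tendsto_Lp_iff_tendsto_eLpNorm' _ _).mp hBtend
  refine h2.congr fun N => ?_
  apply eLpNorm_congr_ae
  filter_upwards [hBcoe N, hφ] with x hx1 hx2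
  simp only [Pi.sub_apply, hx1, hx2]

end Aux

/-- **L² convergence of the averages
`(1/N²) ∑_{n,m=1}^N 1_A(T₁ⁿx) · 1_A(T₂^{n+m}x)` to
`E(1_A | I₁) · E(1_A | I₂)`.** -/
theorem tendsto_L2_averages_indicator_mul
    {X : Type*} [mX : MeasurableSpace X] (μ : Measure X) [IsProbabilityMeasure μ]
    (T₁ T₂ : X → X)
    (hT₁ : MeasurePreserving T₁ μ μ) (hT₂ : MeasurePreserving T₂ μ μ)
    (A : Set X) (hA : MeasurableSet A) :
    Tendsto (fun N : ℕ =>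
        eLpNorm (fun x =>
          (1 / (N : ℝ) ^ 2) * ∑ n ∈ Finset.Icc 1 N, ∑ m ∈ Finset.Icc 1 N,
            A.indicator (fun _ => (1 : ℝ)) (T₁^[n] x) *
              A.indicator (fun _ => (1 : ℝ)) (T₂^[n + m] x) -
          (μ[A.indicator (fun _ => (1 : ℝ)) | invariantAlgebra T₁]) x *
            (μ[A.indicator (fun _ => (1 : ℝ)) | invariantAlgebra T₂]) x) 2 μ)
      atTop (nhds 0) := by
  classical
  set f₀ : X → ℝ := A.indicator (fun _ => (1 : ℝ)) with hf₀
  have hf₀m : Measurable f₀ := measurable_const.indicator hA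
  have hf₀le : ∀ x, ‖f₀ x‖ ≤ 1 := by
    intro x
    by_cases hx : x ∈ A <;> simp [hf₀, hx]
  have hf₀nonneg : ∀ x, 0 ≤ f₀ x := by
    intro x; by_cases hx : x ∈ A <;> simp [hf₀, hx]
  have hf₀le1 : ∀ x, f₀ x ≤ 1 := by
    intro x; by_cases hx : x ∈ A <;> simp [hf₀, hx]
  have hf₀int : Integrable f₀ μ := (integrable_const (1 : ℝ)).indicator hA
  set F : Lp ℝ 2 μ := indicatorConstLp 2 hA (measure_ne_top μ A) (1 : ℝ) with hF
  have hFcoe : ⇑F =ᵐ[μ] f₀ := indicatorConstLp_coeFn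
  set φ₁ : X → ℝ := μ[f₀ | invariantAlgebra T₁] with hφ₁def
  set φ₂ : X → ℝ := μ[f₀ | invariantAlgebra T₂] with hφ₂def
  obtain ⟨L₁, htend₁, hfix₁, haeL₁⟩ := exists_tendsto_condexp T₁ hT₁ F
  obtain ⟨L₂, htend₂, hfix₂, haeL₂⟩ := exists_tendsto_condexp T₂ hT₂ F
  have hφ₁ : ⇑L₁ =ᵐ[μ] φ₁ := haeL₁.trans (condExp_congr_ae hFcoe)
  have hφ₂ : ⇑L₂ =ᵐ[μ] φ₂ := haeL₂.trans (condExp_congr_ae hFcoe)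
  set a₁ : ℕ → X → ℝ := fun N x => (N : ℝ)⁻¹ * ∑ n ∈ Icc 1 N, f₀ (T₁^[n] x) with ha₁
  set a₂ : ℕ → X → ℝ := fun N x => (N : ℝ)⁻¹ * ∑ n ∈ Icc 1 N, f₀ (T₂^[n] x) with ha₂
  have hA₁ : Tendsto (fun N => eLpNorm (a₁ N - φ₁) 2 μ) atTop (𝓝 0) :=
    shifted_average_tendsto T₁ hT₁ htend₁ hfix₁ hFcoe hφ₁ a₁ (fun N x => rfl)
  have hA₂ : Tendsto (fun N => eLpNorm (a₂ N - φ₂) 2 μ) atTop (𝓝 0) :=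
    shifted_average_tendsto T₂ hT₂ htend₂ hfix₂ hFcoe hφ₂ a₂ (fun N x => rfl)
  -- invariance of φ₂ along T₂
  have hφ₂inv : ∀ᵐ x ∂μ, ∀ n, φ₂ (T₂^[n] x) = φ₂ x := by
    refine ae_all_iff.2 fun n => ?_
    have hL2T : ⇑L₂ ∘ T₂ =ᵐ[μ] ⇑L₂ := by
      have h := koopman_coeFn T₂ hT₂ L₂
      rw [show koopman T₂ hT₂ L₂ = L₂ from hfix₂] at h
      exact h.symm
    have h1 : ⇑L₂ ∘ T₂^[n] =ᵐ[μ] ⇑L₂ := comp_iterate_ae_eq_self hT₂ hL2T n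
    have h2 : φ₂ ∘ T₂^[n] =ᵐ[μ] ⇑L₂ ∘ T₂^[n] :=
      (hT₂.iterate n).quasiMeasurePreserving.ae_eq_comp hφ₂.symm
    filter_upwards [h2, h1, hφ₂] with x hx2 hx1 hx3
    exact (hx2.trans hx1).trans hx3
  -- φ₂ is bounded by 1 in absolute value a.e.
  have hφ₂abs : ∀ᵐ x ∂μ, |φ₂ x| ≤ 1 := by
    have hub : φ₂ ≤ᵐ[μ] fun _ => (1 : ℝ) := by
      have h := condExp_mono (m := invariantAlgebra T₂) (μ := μ) hf₀int (integrable_const 1)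
        (Filter.Eventually.of_forall hf₀le1)
      rwa [condExp_const (invariantAlgebra_le T₂)] at h
    have hlb : (0 : X → ℝ) ≤ᵐ[μ] φ₂ :=
      condExp_nonneg (Filter.Eventually.of_forall hf₀nonneg)
    filter_upwards [hub, hlb] with x h1 h2
    rw [abs_le]
    exact ⟨by have := h2; simp only [Pi.zero_apply] at this; linarith, h1⟩
  -- measurability facts
  have hφ₁sm : StronglyMeasurable φ₁ := stronglyMeasurable_condExp.mono (invariantAlgebra_le T₁)
  have hφ₂sm : StronglyMeasurable φ₂ := stronglyMeasurable_condExp.mono (invariantAlgebra_le T₂)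
  have ha₁m : ∀ N, Measurable (a₁ N) := fun N =>
    (Finset.measurable_sum _ fun n _ => hf₀m.comp (hT₁.iterate n).measurable).const_mul _
  have ha₂m : ∀ N, Measurable (a₂ N) := fun N =>
    (Finset.measurable_sum _ fun n _ => hf₀m.comp (hT₂.iterate n).measurable).const_mul _
  -- the pointwise double-sum identity
  have hD : ∀ (N : ℕ) (x : X),
      (1 / (N : ℝ) ^ 2) * ∑ n ∈ Icc 1 N, ∑ m ∈ Icc 1 N, f₀ (T₁^[n] x) * f₀ (T₂^[n + m] x)
        = (N : ℝ)⁻¹ * ∑ n ∈ Icc 1 N, f₀ (T₁^[n] x) * a₂ N (T₂^[n] x) := by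
    intro N x
    have h1 : ∀ n m : ℕ, f₀ (T₂^[n + m] x) = f₀ (T₂^[m] (T₂^[n] x)) := fun n m => by
      rw [Nat.add_comm, Function.iterate_add_apply]
    simp only [ha₂, h1]
    rw [Finset.mul_sum, Finset.mul_sum]
    refine Finset.sum_congr rfl fun n _ => ?_
    rw [← Finset.mul_sum]
    rw [one_div, sq, mul_inv]
    ring
  -- the main bound for N ≥ 1
  have hbound : ∀ N : ℕ, 1 ≤ N →
      eLpNorm (fun x =>
          (1 / (N : ℝ) ^ 2) * ∑ n ∈ Finset.Icc 1 N, ∑ m ∈ Finset.Icc 1 N,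
            f₀ (T₁^[n] x) * f₀ (T₂^[n + m] x) - φ₁ x * φ₂ x) 2 μ
        ≤ eLpNorm (a₂ N - φ₂) 2 μ + eLpNorm (a₁ N - φ₁) 2 μ := by
    intro N hN
    have hNne : ((N : ℕ) : ℝ≥0∞) ≠ 0 := by
      exact_mod_cast Nat.one_le_iff_ne_zero.mp hN
    have hsplit : (fun x =>
        (1 / (N : ℝ) ^ 2) * ∑ n ∈ Finset.Icc 1 N, ∑ m ∈ Finset.Icc 1 N,
            f₀ (T₁^[n] x) * f₀ (T₂^[n + m] x) - φ₁ x * φ₂ x) =ᵐ[μ]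
        (fun x => (N : ℝ)⁻¹ * ∑ n ∈ Icc 1 N,
            f₀ (T₁^[n] x) * (a₂ N (T₂^[n] x) - φ₂ (T₂^[n] x)))
          + fun x => φ₂ x * (a₁ N x - φ₁ x) := by
      filter_upwards [hφ₂inv] with x hx
      simp only [Pi.add_apply]
      rw [hD N x]
      have hsc : ∑ n ∈ Icc 1 N, f₀ (T₁^[n] x) * (a₂ N (T₂^[n] x) - φ₂ (T₂^[n] x))
          = (∑ n ∈ Icc 1 N, f₀ (T₁^[n] x) * a₂ N (T₂^[n] x))
            - ∑ n ∈ Icc 1 N, f₀ (T₁^[n] x) * φ₂ x := by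
        rw [← Finset.sum_sub_distrib]
        exact Finset.sum_congr rfl fun n _ => by rw [hx n]; ring
      rw [hsc, ← Finset.sum_mul]
      simp only [ha₁]
      ring
    rw [eLpNorm_congr_ae hsplit]
    have haesm1 : AEStronglyMeasurable (fun x => (N : ℝ)⁻¹ * ∑ n ∈ Icc 1 N,
        f₀ (T₁^[n] x) * (a₂ N (T₂^[n] x) - φ₂ (T₂^[n] x))) μ := by
      refine Measurable.aestronglyMeasurable ?_
      refine Measurable.const_mul ?_ _
      refine Finset.measurable_sum _ fun n _ => ?_
      exact (hf₀m.comp (hT₁.iterate n).measurable).mul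
        (((ha₂m N).sub hφ₂sm.measurable).comp (hT₂.iterate n).measurable)
    have haesm3 : AEStronglyMeasurable (fun x => φ₂ x * (a₁ N x - φ₁ x)) μ :=
      (hφ₂sm.measurable.mul ((ha₁m N).sub hφ₁sm.measurable)).aestronglyMeasurable
    refine (eLpNorm_add_le haesm1 haesm3 one_le_two).trans ?_
    have hbound3 : eLpNorm (fun x => φ₂ x * (a₁ N x - φ₁ x)) 2 μ
        ≤ eLpNorm (a₁ N - φ₁) 2 μ := by
      refine eLpNorm_mono_ae ?_
      filter_upwards [hφ₂abs] with x hx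
      rw [Real.norm_eq_abs, abs_mul, Pi.sub_apply, Real.norm_eq_abs]
      exact mul_le_of_le_one_left (abs_nonneg _) hx
    have hbound1 : eLpNorm (fun x => (N : ℝ)⁻¹ * ∑ n ∈ Icc 1 N,
        f₀ (T₁^[n] x) * (a₂ N (T₂^[n] x) - φ₂ (T₂^[n] x))) 2 μ
        ≤ eLpNorm (a₂ N - φ₂) 2 μ := by
      have hterm : ∀ n ∈ Icc 1 N,
          eLpNorm (fun x => f₀ (T₁^[n] x) * (a₂ N (T₂^[n] x) - φ₂ (T₂^[n] x))) 2 μ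
            ≤ eLpNorm (a₂ N - φ₂) 2 μ := by
        intro n _
        have h1 : eLpNorm (fun x => f₀ (T₁^[n] x) * (a₂ N (T₂^[n] x) - φ₂ (T₂^[n] x))) 2 μ
            ≤ eLpNorm ((a₂ N - φ₂) ∘ T₂^[n]) 2 μ := by
          refine eLpNorm_mono_ae (Filter.Eventually.of_forall fun x => ?_)
          rw [Real.norm_eq_abs, abs_mul, Function.comp_apply, Pi.sub_apply, Real.norm_eq_abs]
          exact mul_le_of_le_one_left (abs_nonneg _) (by simpa using hf₀le (T₁^[n] x))
        refine h1.trans_eq ?_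
        exact eLpNorm_comp_measurePreserving
          (((ha₂m N).sub hφ₂sm.measurable).aestronglyMeasurable) (hT₂.iterate n)
      have hfn : (fun x => (N : ℝ)⁻¹ * ∑ n ∈ Icc 1 N,
          f₀ (T₁^[n] x) * (a₂ N (T₂^[n] x) - φ₂ (T₂^[n] x)))
          = (N : ℝ)⁻¹ • ∑ n ∈ Icc 1 N,
            (fun x => f₀ (T₁^[n] x) * (a₂ N (T₂^[n] x) - φ₂ (T₂^[n] x))) := by
        funext x
        simp [Finset.sum_apply]
      rw [hfn, eLpNorm_const_smul]
      have hsum : eLpNorm (∑ n ∈ Icc 1 N,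
          (fun x => f₀ (T₁^[n] x) * (a₂ N (T₂^[n] x) - φ₂ (T₂^[n] x)))) 2 μ
          ≤ (N : ℝ≥0∞) * eLpNorm (a₂ N - φ₂) 2 μ := by
        refine (eLpNorm_sum_le (fun n _ => ?_) one_le_two).trans ?_
        · exact ((hf₀m.comp (hT₁.iterate n).measurable).mul
            (((ha₂m N).sub hφ₂sm.measurable).comp (hT₂.iterate n).measurable)).aestronglyMeasurable
        · refine (Finset.sum_le_sum hterm).trans_eq ?_
          rw [Finset.sum_const, Nat.card_Icc, Nat.add_sub_cancel, nsmul_eq_mul]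
      calc (‖(N : ℝ)⁻¹‖₊ : ℝ≥0∞) * eLpNorm (∑ n ∈ Icc 1 N,
            (fun x => f₀ (T₁^[n] x) * (a₂ N (T₂^[n] x) - φ₂ (T₂^[n] x)))) 2 μ
          ≤ (‖(N : ℝ)⁻¹‖₊ : ℝ≥0∞) * ((N : ℝ≥0∞) * eLpNorm (a₂ N - φ₂) 2 μ) :=
            mul_le_mul_right hsum _
        _ = eLpNorm (a₂ N - φ₂) 2 μ := by
            have hcoe : (‖(N : ℝ)⁻¹‖₊ : ℝ≥0∞) = ((N : ℕ) : ℝ≥0∞)⁻¹ := by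
              rw [nnnorm_inv]
              rw [ENNReal.coe_inv (by exact_mod_cast Nat.one_le_iff_ne_zero.mp hN)]
              norm_cast
            rw [hcoe, ← mul_assoc, ENNReal.inv_mul_cancel hNne (ENNReal.natCast_ne_top N),
              one_mul]
    exact add_le_add hbound1 hbound3
  -- squeeze
  have hupper : Tendsto (fun N => eLpNorm (a₂ N - φ₂) 2 μ + eLpNorm (a₁ N - φ₁) 2 μ)
      atTop (𝓝 0) := by
    simpa using hA₂.add hA₁
  refine tendsto_of_tendsto_of_tendsto_of_le_of_le' tendsto_const_nhds hupper
    (Filter.Eventually.of_forall fun N => zero_le) ?_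
  exact Filter.eventually_atTop.2 ⟨1, fun N hN => hbound N hN⟩
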